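/- arXiv:0912.2577 — 2 statements merged into one kernel-verified Lean document; each statement's English description precedes it below -/
import Mathlib

section
/- Fix d odd and large, p_s with θ = 1-2p_s satisfying θ² > C''·(log d)/d for a sufficiently large constant C''. Let q_h denote the probability of incorrect reconstruction by recursive majority against an adversary at height h (root state 0, with 2 adversarial children per node fixed to 1). If q_{h-1} ≤ 1/d, then q_h ≤ 1/d. In particular, since q_0 = 0, q_h ≤ 1/d for all h ≥ 0. -/
/-!
Write `q_{h+1} = E[P(Bin(Z, 1 - q_h) < (d+1)/2)]` with `Z ~ Bin(d-2, 1-p_s)` and split at the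
threshold `m = (d+1)/2 + log₂ d + 4`.

Below `m`: the Chernoff bound at tilt `p/(1-p)` holds for every `p ≥ p_s`; taking
`p = max p_s (1/4)` keeps the tilt positive, and gives `P(Z < m) ≤ 2^(2m-d+2) e^(-(d/4) θ²)`,
which is at most `1/(2d)` because `θ² > 20 log d / d`.

Above `m`: reconstruction fails only if at least `log₂ d + 5` of the `i` children are
misreconstructed; the Chernoff bound at tilt `1/2` bounds this by `(1+q)^i 2^((d+1)/2-i)`,
and `(1+q)^i ≤ e` once `q ≤ 1/d`.
-/

/-- Probability that Bin(n,r) = i. -/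
noncomputable def binProb (n : ℕ) (r : ℝ) (i : ℕ) : ℝ :=
  (n.choose i : ℝ) * r ^ i * (1 - r) ^ (n - i)

/-- Probability that Bin(n,r) ≥ (d+1)/2. -/
noncomputable def majTail (d n : ℕ) (r : ℝ) : ℝ :=
  ∑ j ∈ Finset.Icc ((d + 1) / 2) n, binProb n r j

/-- `qAdv d ps h` is the probability of incorrect reconstruction at height h by
recursive majority against an adversary (root state 0, 2 adversarial children per node
fixed to 1): with Z ~ Bin(d-2, 1-ps) children in state 0, and conditioned on Z = i,
Z' ~ Bin(i, 1 - q_{h-1}) of them correctly reconstructed, reconstruction succeeds if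
Z' ≥ (d+1)/2. -/
noncomputable def qAdv (d : ℕ) (ps : ℝ) : ℕ → ℝ
  | 0 => 0
  | h + 1 =>
      1 - ∑ i ∈ Finset.range (d - 1), binProb (d - 2) (1 - ps) i * majTail d i (1 - qAdv d ps h)

open Finset Real

section Binomial

variable {n k : ℕ} {r : ℝ}

lemma binProb_nonneg (hr0 : 0 ≤ r) (hr1 : r ≤ 1) (n i : ℕ) : 0 ≤ binProb n r i := by
  have : 0 ≤ 1 - r := by linarith
  unfold binProb
  positivity

lemma sum_pow_mul_binProb (n : ℕ) (r x : ℝ) :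
    ∑ i ∈ range (n + 1), x ^ i * binProb n r i = (r * x + (1 - r)) ^ n := by
  rw [add_pow]
  refine sum_congr rfl fun i _ => ?_
  simp only [binProb, mul_pow]
  ring

lemma sum_binProb (n : ℕ) (r : ℝ) : ∑ i ∈ range (n + 1), binProb n r i = 1 := by
  simpa using sum_pow_mul_binProb n r 1

lemma pow_mul_sum_range_binProb_le {x : ℝ} (hx0 : 0 ≤ x) (hx1 : x ≤ 1) (hr0 : 0 ≤ r)
    (hr1 : r ≤ 1) (hk : k ≤ n + 1) :
    x ^ k * ∑ i ∈ range k, binProb n r i ≤ (r * x + (1 - r)) ^ n := by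
  have hb := binProb_nonneg hr0 hr1 n
  calc x ^ k * ∑ i ∈ range k, binProb n r i
      ≤ ∑ i ∈ range k, x ^ i * binProb n r i := by
        rw [mul_sum]
        refine sum_le_sum fun i hi => mul_le_mul_of_nonneg_right ?_ (hb i)
        exact pow_le_pow_of_le_one hx0 hx1 (mem_range.1 hi).le
    _ ≤ ∑ i ∈ range (n + 1), x ^ i * binProb n r i :=
        sum_le_sum_of_subset_of_nonneg (range_subset_range.2 hk)
          fun i _ _ => mul_nonneg (pow_nonneg hx0 i) (hb i)
    _ = (r * x + (1 - r)) ^ n := sum_pow_mul_binProb n r x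

lemma sum_range_binProb_le_exp {ps p : ℝ} (hps0 : 0 ≤ ps) (hps : ps ≤ p) (hp0 : 0 < p)
    (hp : p ≤ 1 / 2) (hkn : k ≤ n) (hnk : n ≤ 2 * k) :
    ∑ i ∈ range k, binProb n (1 - ps) i ≤
      2 ^ (2 * k - n) * exp (-((n - k : ℕ) * (1 - 2 * p) ^ 2)) := by
  have hp1 : 0 < 1 - p := by linarith
  have hx1 : p / (1 - p) ≤ 1 := (div_le_one hp1).2 (by linarith)
  have hchernoff := pow_mul_sum_range_binProb_le (div_nonneg hp0.le hp1.le) hx1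
    (r := 1 - ps) (by linarith) (by linarith) (by omega : k ≤ n + 1)
  obtain ⟨j, e, rfl, rfl⟩ : ∃ j e, k = j + e ∧ n = 2 * j + e :=
    ⟨n - k, 2 * k - n, by omega, by omega⟩
  rw [show 2 * (j + e) - (2 * j + e) = e by omega, show 2 * j + e - (j + e) = j by omega]
  set x := p / (1 - p)
  have hx0 : 0 ≤ x := div_nonneg hp0.le hp1.le
  have hx : x * (2 * (1 - p)) = 2 * p := by simp only [x]; field_simp
  have hbase : (1 - ps) * x + (1 - (1 - ps)) ≤ 2 * p := by
    nlinarith [mul_le_mul_of_nonneg_right hps (by linarith : 0 ≤ 1 - x)]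
  have hfactor : x ^ (j + e) * ((4 * p * (1 - p)) ^ j * (2 * (1 - p)) ^ e) =
      (2 * p) ^ (2 * j + e) := by
    rw [show 4 * p * (1 - p) = 2 * p * (2 * (1 - p)) by ring, ← hx]
    generalize 2 * (1 - p) = b
    ring
  have hsum : ∑ i ∈ range (j + e), binProb (2 * j + e) (1 - ps) i ≤
      (4 * p * (1 - p)) ^ j * (2 * (1 - p)) ^ e := by
    refine le_of_mul_le_mul_left ?_ (pow_pos (div_pos hp0 hp1) (j + e))
    rw [hfactor]
    have hbase0 : 0 ≤ (1 - ps) * x + (1 - (1 - ps)) :=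
      add_nonneg (mul_nonneg (by linarith) hx0) (by linarith)
    exact hchernoff.trans (pow_le_pow_left₀ hbase0 hbase _)
  have hvar : 4 * p * (1 - p) ≤ exp (-(1 - 2 * p) ^ 2) := by
    nlinarith [add_one_le_exp (-(1 - 2 * p) ^ 2)]
  calc ∑ i ∈ range (j + e), binProb (2 * j + e) (1 - ps) i
      ≤ (4 * p * (1 - p)) ^ j * (2 * (1 - p)) ^ e := hsum
    _ ≤ exp (-(1 - 2 * p) ^ 2) ^ j * 2 ^ e := by
        gcongr
        nlinarith
    _ = 2 ^ e * exp (-(j * (1 - 2 * p) ^ 2)) := by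
        rw [← exp_nat_mul]; ring_nf

lemma two_pow_mul_sum_range_binProb_le {q : ℝ} (hq0 : 0 ≤ q) (hq1 : q ≤ 1) (hk : k ≤ n + 1) :
    2 ^ n * ∑ i ∈ range k, binProb n (1 - q) i ≤ 2 ^ k * (1 + q) ^ n := by
  have hchernoff := pow_mul_sum_range_binProb_le (r := 1 - q) (x := 1 / 2) (by norm_num)
    (by norm_num) (by linarith) (by linarith) hk
  rw [show (1 - q) * (1 / 2) + (1 - (1 - q)) = (1 + q) / 2 by ring, div_pow, div_pow,
    one_pow, div_mul_eq_mul_div, one_mul, div_le_div_iff₀ (by positivity) (by positivity)]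
    at hchernoff
  linarith

lemma sum_range_mul_le {w f : ℕ → ℝ} {m N : ℕ} {δ : ℝ} (hmN : m ≤ N) (hw : ∀ i, 0 ≤ w i)
    (hw1 : ∑ i ∈ range N, w i ≤ 1) (hf1 : ∀ i < m, f i ≤ 1) (hδ : 0 ≤ δ)
    (hfδ : ∀ i, m ≤ i → i < N → f i ≤ δ) :
    ∑ i ∈ range N, w i * f i ≤ ∑ i ∈ range m, w i + δ := by
  rw [← sum_range_add_sum_Ico _ hmN]
  gcongr with i hi i hi
  · exact mul_le_of_le_one_right (hw i) (hf1 i (mem_range.1 hi))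
  · calc ∑ i ∈ Ico m N, w i * f i ≤ ∑ i ∈ Ico m N, w i * δ :=
          sum_le_sum fun i hi => mul_le_mul_of_nonneg_left
            (hfδ i (mem_Ico.1 hi).1 (mem_Ico.1 hi).2) (hw i)
      _ ≤ δ := by
          rw [← sum_mul]
          refine mul_le_of_le_one_left hδ (le_trans ?_ hw1)
          exact sum_le_sum_of_subset_of_nonneg (fun i hi => mem_range.2 (mem_Ico.1 hi).2)
            fun i _ _ => hw i

end Binomial

section Majority

variable {d i : ℕ} {r : ℝ}

lemma majTail_nonneg (hr0 : 0 ≤ r) (hr1 : r ≤ 1) : 0 ≤ majTail d i r :=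
  sum_nonneg fun j _ => binProb_nonneg hr0 hr1 i j

lemma majTail_le_one (hr0 : 0 ≤ r) (hr1 : r ≤ 1) : majTail d i r ≤ 1 := by
  rw [← sum_binProb i r]
  refine sum_le_sum_of_subset_of_nonneg (fun j hj => ?_) fun j _ _ => binProb_nonneg hr0 hr1 i j
  simp only [mem_Icc] at hj
  exact mem_range.2 (by omega)

lemma one_sub_majTail (h : (d + 1) / 2 ≤ i + 1) (r : ℝ) :
    1 - majTail d i r = ∑ j ∈ range ((d + 1) / 2), binProb i r j := by
  rw [← sum_binProb i r, ← sum_range_add_sum_Ico _ h, majTail, ← Ico_add_one_right_eq_Icc]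
  ring

end Majority

section Reconstruction

variable {d h : ℕ} {ps : ℝ}

lemma sum_range_sub_one_binProb (hd : 2 ≤ d) (r : ℝ) :
    ∑ i ∈ range (d - 1), binProb (d - 2) r i = 1 := by
  rw [show d - 1 = d - 2 + 1 by omega, sum_binProb]

lemma qAdv_succ (hd : 2 ≤ d) : qAdv d ps (h + 1) =
    ∑ i ∈ range (d - 1), binProb (d - 2) (1 - ps) i * (1 - majTail d i (1 - qAdv d ps h)) := by
  simp only [qAdv, mul_one_sub, sum_sub_distrib, sum_range_sub_one_binProb hd]

lemma qAdv_mem_Icc (hd : 2 ≤ d) (hps0 : 0 ≤ ps) (hps1 : ps ≤ 1) (h : ℕ) :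
    qAdv d ps h ∈ Set.Icc 0 1 := by
  induction h with
  | zero => simp [qAdv]
  | succ h ih =>
    obtain ⟨hq0, hq1⟩ := ih
    have hb := binProb_nonneg (n := d - 2) (r := 1 - ps) (by linarith) (by linarith)
    have hT0 (i : ℕ) : 0 ≤ majTail d i (1 - qAdv d ps h) :=
      majTail_nonneg (by linarith) (by linarith)
    have hT1 (i : ℕ) : majTail d i (1 - qAdv d ps h) ≤ 1 :=
      majTail_le_one (by linarith) (by linarith)
    rw [qAdv_succ hd]
    refine ⟨sum_nonneg fun i _ => mul_nonneg (hb i) (by linarith [hT1 i]), ?_⟩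
    calc _ ≤ ∑ i ∈ range (d - 1), binProb (d - 2) (1 - ps) i :=
          sum_le_sum fun i _ => mul_le_of_le_one_right (hb i) (by linarith [hT0 i])
      _ = 1 := sum_range_sub_one_binProb hd _

end Reconstruction

section Estimates

lemma mul_le_of_two_pow_le {d L : ℕ} (hd : 2 ^ 16 ≤ d) (hL : 2 ^ L ≤ d) : 64 * L ≤ d := by
  rcases Nat.lt_or_ge L 14 with hL14 | hL14
  · omega
  · have hsplit : 2 ^ L = 2 ^ 7 * 2 ^ (L - 7) := by rw [← pow_add]; congr 1; omega
    have := Nat.lt_two_pow_self (n := L - 7)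
    omega

lemma log_le_div_of_two_pow_le {x : ℝ} (hx : 2 ^ 16 ≤ x) : log x ≤ x / 128 := by
  have hx0 : 0 < x := lt_of_lt_of_le (by norm_num) hx
  have hsqrt : 256 ≤ √x := by
    rw [show (256 : ℝ) = √(2 ^ 16) by rw [show (2 : ℝ) ^ 16 = 256 ^ 2 by norm_num,
      sqrt_sq (by norm_num)]]
    exact sqrt_le_sqrt hx
  have hlog := log_le_sub_one_of_pos (sqrt_pos.2 hx0)
  rw [log_sqrt hx0.le] at hlog
  nlinarith [mul_self_sqrt hx0.le]

lemma sum_range_binProb_le_inv {d L : ℕ} {ps : ℝ} (hd : 2 ^ 16 ≤ d) (hL : 2 ^ L ≤ d)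
    (hps0 : 0 ≤ ps) (hps : ps ≤ 1 / 2) (hθ : 20 * log d / d < (1 - 2 * ps) ^ 2) :
    ∑ i ∈ range ((d + 1) / 2 + L + 4), binProb (d - 2) (1 - ps) i ≤ 1 / (2 * d) := by
  set k := (d + 1) / 2 + L + 4
  have hL64 := mul_le_of_two_pow_le hd hL
  have hdR : (2 : ℝ) ^ 16 ≤ d := by exact_mod_cast hd
  have hd0 : (0 : ℝ) < d := lt_of_lt_of_le (by norm_num) hdR
  have hlog := log_le_div_of_two_pow_le hdR
  set p := max ps (1 / 4) with hp
  have hθp : 20 * log d / d ≤ (1 - 2 * p) ^ 2 := by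
    rcases le_total ps (1 / 4) with h | h
    · rw [hp, max_eq_right h, div_le_iff₀ hd0]; nlinarith
    · rw [hp, max_eq_left h]; exact hθ.le
  have hnk : (d : ℝ) / 4 ≤ (d - 2 - k : ℕ) := by
    have : d ≤ 4 * (d - 2 - k) := by omega
    rw [div_le_iff₀ (by norm_num), mul_comm]
    exact_mod_cast this
  have hexp : 5 * log d ≤ (d - 2 - k : ℕ) * (1 - 2 * p) ^ 2 :=
    calc 5 * log d = d / 4 * (20 * log d / d) := by field_simp; ring
      _ ≤ _ := mul_le_mul hnk hθp (by positivity) (by positivity)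
  have h2k : (2 : ℝ) ^ (2 * k - (d - 2)) ≤ 2 ^ 11 * d ^ 2 :=
    calc (2 : ℝ) ^ (2 * k - (d - 2)) ≤ 2 ^ (2 * L + 11) :=
          pow_le_pow_right₀ (by norm_num) (by omega)
      _ = 2 ^ 11 * ((2 : ℝ) ^ L) ^ 2 := by ring
      _ ≤ 2 ^ 11 * d ^ 2 := by gcongr; exact_mod_cast hL
  calc _ ≤ 2 ^ (2 * k - (d - 2)) * exp (-((d - 2 - k : ℕ) * (1 - 2 * p) ^ 2)) :=
        sum_range_binProb_le_exp hps0 (le_max_left _ _) (lt_max_of_lt_right (by norm_num))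
          (max_le hps (by norm_num)) (by omega) (by omega)
    _ ≤ 2 ^ 11 * d ^ 2 * exp (-(5 * log d)) := by gcongr
    _ = 2 ^ 11 / d ^ 3 := by
        rw [show 5 * log (d : ℝ) = log ((d : ℝ) ^ 5) by rw [log_pow]; norm_num, exp_neg,
          exp_log (by positivity)]
        field_simp
    _ ≤ 1 / (2 * d) := by
        rw [div_le_div_iff₀ (by positivity) (by positivity)]
        nlinarith

lemma one_sub_majTail_le_inv {d L i : ℕ} {q : ℝ} (hL : d < 2 ^ (L + 1))
    (hi : (d + 1) / 2 + L + 4 ≤ i) (hid : i ≤ d) (hq0 : 0 ≤ q) (hq : q ≤ 1 / d) :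
    1 - majTail d i (1 - q) ≤ 1 / (2 * d) := by
  set c := (d + 1) / 2
  have hd0 : (0 : ℝ) < d := by exact_mod_cast (by omega : 0 < d)
  have hqi : i * q ≤ 1 :=
    calc i * q ≤ d * (1 / d) := by gcongr
      _ = 1 := by field_simp
  have hq1 : q ≤ 1 := hq.trans ((div_le_one hd0).2 (by exact_mod_cast (by omega : 1 ≤ d)))
  have hgrowth : (1 + q) ^ i ≤ 3 :=
    calc (1 + q) ^ i ≤ exp q ^ i := by gcongr; linarith [add_one_le_exp q]
      _ = exp (i * q) := (exp_nat_mul q i).symm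
      _ ≤ exp 1 := exp_le_exp.2 hqi
      _ ≤ 3 := by linarith [exp_one_lt_d9]
  have hpow : 8 * d * 2 ^ c ≤ 2 ^ i :=
    calc 8 * d * 2 ^ c ≤ 2 ^ 3 * 2 ^ (L + 1) * 2 ^ c := by gcongr; norm_num
      _ = 2 ^ (c + L + 4) := by ring
      _ ≤ 2 ^ i := Nat.pow_le_pow_right (by norm_num) hi
  have hpowR : (8 * d * 2 ^ c : ℝ) ≤ 2 ^ i := by exact_mod_cast hpow
  rw [one_sub_majTail (by omega)]
  have hchernoff := two_pow_mul_sum_range_binProb_le hq0 hq1 (n := i) (k := c) (by omega)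
  have hS0 : 0 ≤ ∑ j ∈ range c, binProb i (1 - q) j :=
    sum_nonneg fun j _ => binProb_nonneg (by linarith) (by linarith) i j
  have hS : 2 ^ c * (8 * d * ∑ j ∈ range c, binProb i (1 - q) j) ≤ 2 ^ c * 3 := by
    nlinarith [mul_le_mul_of_nonneg_right hpowR hS0, pow_pos (two_pos : (0 : ℝ) < 2) c]
  have hS' := le_of_mul_le_mul_left hS (by positivity)
  rw [le_div_iff₀ (by positivity)]
  nlinarith

end Estimates

lemma qAdv_succ_le_inv {d h : ℕ} {ps : ℝ} (hd : 2 ^ 16 ≤ d) (hps0 : 0 ≤ ps) (hps : ps ≤ 1 / 2)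
    (hθ : 20 * log d / d < (1 - 2 * ps) ^ 2) (hq : qAdv d ps h ≤ 1 / d) :
    qAdv d ps (h + 1) ≤ 1 / d := by
  set L := Nat.log 2 d
  have hL : 2 ^ L ≤ d := Nat.pow_log_le_self 2 (by omega)
  have hL' : d < 2 ^ (L + 1) := Nat.lt_pow_succ_log_self (by norm_num) d
  have hL64 := mul_le_of_two_pow_le hd hL
  obtain ⟨hq0, hq1⟩ := qAdv_mem_Icc (d := d) (by omega) hps0 (by linarith) h
  have hb := binProb_nonneg (n := d - 2) (r := 1 - ps) (by linarith) (by linarith)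
  have hT (i : ℕ) : 0 ≤ majTail d i (1 - qAdv d ps h) :=
    majTail_nonneg (by linarith) (by linarith)
  rw [qAdv_succ (by omega)]
  calc _ ≤ ∑ i ∈ range ((d + 1) / 2 + L + 4), binProb (d - 2) (1 - ps) i + 1 / (2 * d) :=
        sum_range_mul_le (by omega) hb (sum_range_sub_one_binProb (by omega) _).le
          (fun i _ => by linarith [hT i]) (by positivity)
          fun i hi hid => one_sub_majTail_le_inv hL' hi (by omega) hq0 hq
    _ ≤ 1 / (2 * d) + 1 / (2 * d) := by
        gcongr
        exact sum_range_binProb_le_inv hd hL hps0 hps hθ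
    _ = 1 / d := by field_simp; norm_num

/-- For d odd and large and θ = 1-2p_s with θ² > C''·(log d)/d for
sufficiently large C'', if q_{h-1} ≤ 1/d then q_h ≤ 1/d; in particular, since q_0 = 0,
q_h ≤ 1/d for all h. -/
theorem stmt13 :
    ∃ C : ℝ, 0 < C ∧ ∃ d₀ : ℕ, ∀ d : ℕ, d₀ ≤ d → Odd d →
      ∀ ps : ℝ, 0 ≤ ps → ps ≤ 1/2 → (1 - 2 * ps) ^ 2 > C * Real.log d / d →
        (∀ h : ℕ, qAdv d ps h ≤ 1 / d → qAdv d ps (h + 1) ≤ 1 / d) ∧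
        (∀ h : ℕ, qAdv d ps h ≤ 1 / d) := by
  refine ⟨20, by norm_num, 2 ^ 16, fun d hd _ ps hps0 hps hθ => ?_⟩
  have hstep (h : ℕ) : qAdv d ps h ≤ 1 / d → qAdv d ps (h + 1) ≤ 1 / d :=
    qAdv_succ_le_inv hd hps0 hps hθ
  refine ⟨hstep, fun h => ?_⟩
  induction h with
  | zero => simp only [qAdv]; positivity
  | succ h ih => exact hstep h ih
end

section
/- In the same branching process setup, if each node is radioactive with probability at most α = 1/h(n) where h(n) → ∞, then for all sufficiently large n the root is the father of a (d-1)-ary stable subtree with probability at least 1 - 1/√h(n). -/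
/-!
A node is unstable only if it is radioactive or two of its children are unstable. The subtrees
of distinct children are disjoint, so their stability events are independent, and an upper
bound `ε` on the probability of instability propagates from the leaves to the root as soon as
`α + d²ε² ≤ ε`. For `α = 1/h` and `ε = 1/√h` this holds once `√h ≥ 1 + d²`.
-/

open MeasureTheory ProbabilityTheory

/-- `stableAux d H R ω fuel j path` decides whether the node at depth `j` (reached by
`path`) of the d-ary tree of height `H` is stable: leaves (depth H) are stable, and an
internal node is stable iff it is not radioactive (`R` gives the radioactivity
indicators) and at least d-1 of its children are stable. `fuel` bounds the recursion
depth (call with `fuel = H`, `j = 0`). -/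
def stableAux {Ω : Type*} (d H : ℕ)
    (R : (Σ j : Fin H, (Fin (j : ℕ) → Fin d)) → Ω → Bool) (ω : Ω) :
    (fuel : ℕ) → (j : ℕ) → (Fin j → Fin d) → Bool
  | 0, _, _ => true
  | fuel + 1, j, path =>
      if h : j < H then
        !(R ⟨⟨j, h⟩, path⟩ ω) &&
          decide (d - 1 ≤ (Finset.univ.filter fun c : Fin d =>
            stableAux d H R ω fuel (j + 1) (Fin.snoc path c) = true).card)
      else true

open Finset in
theorem exists_ne_not_of_card_filter_lt_pred {d : ℕ} (p : Fin d → Prop) [DecidablePred p]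
    (h : #{c | p c} < d - 1) : ∃ c c', c ≠ c' ∧ ¬p c ∧ ¬p c' := by
  have hsplit : #{c | p c} + #{c | ¬p c} = d := by
    simpa using card_filter_add_card_filter_not (s := univ) p
  obtain ⟨c, hc, c', hc', hne⟩ := one_lt_card.1 (show 1 < #{c | ¬p c} by omega)
  exact ⟨c, c', hne, (mem_filter.1 hc).2, (mem_filter.1 hc').2⟩

theorem ENNReal.sq_add_mul_sq_le {ε k : ENNReal} (h : (1 + k) * ε ≤ 1) :
    ε ^ 2 + k * ε ^ 2 ≤ ε :=
  calc ε ^ 2 + k * ε ^ 2 = (1 + k) * ε * ε := by ring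
    _ ≤ ε := by simpa using mul_le_mul_left h ε

theorem ENNReal.natCast_mul_ofReal_one_div_sqrt_le_one {k : ℕ} {x : ℝ}
    (hx : (k : ℝ) ^ 2 ≤ x) :
    (k : ENNReal) * ENNReal.ofReal (1 / √x) ≤ 1 := by
  rcases k.eq_zero_or_pos with rfl | hk
  · simp
  have hsqrt : (k : ℝ) ≤ √x := Real.le_sqrt_of_sq_le hx
  rw [← ENNReal.ofReal_natCast, ← ENNReal.ofReal_mul k.cast_nonneg, ← ENNReal.ofReal_one]
  refine ENNReal.ofReal_le_ofReal ?_
  rw [mul_one_div, div_le_one ((Nat.cast_pos.2 hk).trans_le hsqrt)]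
  exact hsqrt

theorem ENNReal.ofReal_one_div_sqrt_sq {x : ℝ} (hx : 0 ≤ x) :
    ENNReal.ofReal (1 / √x) ^ 2 = ENNReal.ofReal (1 / x) := by
  rw [← ENNReal.ofReal_pow (by positivity), div_pow, one_pow, Real.sq_sqrt hx]

abbrev TreeNode (d H : ℕ) := Σ j : Fin H, (Fin (j : ℕ) → Fin d)

def subtreeNodes (d H j : ℕ) (path : Fin j → Fin d) : Set (TreeNode d H) :=
  {v | ∃ hle : j ≤ (v.1 : ℕ), ∀ i : Fin j, v.2 (Fin.castLE hle i) = path i}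

section Subtree

variable {d H j : ℕ} {path : Fin j → Fin d}

theorem mem_subtreeNodes_self (hj : j < H) :
    (⟨⟨j, hj⟩, path⟩ : TreeNode d H) ∈ subtreeNodes d H j path :=
  ⟨le_rfl, fun _ => rfl⟩

theorem subtreeNodes_snoc_subset (c : Fin d) :
    subtreeNodes d H (j + 1) (Fin.snoc path c) ⊆ subtreeNodes d H j path := by
  rintro v ⟨hle, hv⟩
  refine ⟨by omega, fun i => ?_⟩
  simpa using hv i.castSucc

theorem disjoint_subtreeNodes_snoc {c c' : Fin d} (hcc : c ≠ c') :
    Disjoint (subtreeNodes d H (j + 1) (Fin.snoc path c))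
      (subtreeNodes d H (j + 1) (Fin.snoc path c')) := by
  rw [Set.disjoint_left]
  rintro v ⟨hle, hv⟩ ⟨hle', hv'⟩
  have hc := hv (Fin.last j)
  have hc' := hv' (Fin.last j)
  simp only [Fin.snoc_last] at hc hc'
  exact hcc (hc.symm.trans hc')

end Subtree

section Stability

variable {Ω : Type*} {d H : ℕ} (R : TreeNode d H → Ω → Bool)

abbrev subtreeSigma (j : ℕ) (path : Fin j → Fin d) : MeasurableSpace Ω :=
  ⨆ v ∈ subtreeNodes d H j path, MeasurableSpace.comap (R v) inferInstance

def unstableSet (fuel j : ℕ) (path : Fin j → Fin d) : Set Ω :=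
  {ω | stableAux d H R ω fuel j path = false}

variable {R}

theorem subtreeSigma_le [MeasurableSpace Ω] (hmeas : ∀ v, Measurable (R v)) (j : ℕ)
    (path : Fin j → Fin d) : subtreeSigma R j path ≤ ‹MeasurableSpace Ω› :=
  iSup₂_le fun v _ => (hmeas v).comap_le

theorem measurable_stableAux (fuel j : ℕ) (path : Fin j → Fin d) :
    Measurable[subtreeSigma R j path] (fun ω => stableAux d H R ω fuel j path) := by
  induction fuel generalizing j with
  | zero => exact measurable_const
  | succ fuel ih =>
    let := subtreeSigma R j path
    by_cases hj : j < H
    · have hroot : Measurable (R ⟨⟨j, hj⟩, path⟩) :=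
        (comap_measurable _).mono (le_iSup₂ (f := fun v _ => MeasurableSpace.comap (R v) _)
          _ (mem_subtreeNodes_self hj)) le_rfl
      have hchildren : Measurable fun ω (c : Fin d) =>
          stableAux d H R ω fuel (j + 1) (Fin.snoc path c) :=
        measurable_pi_lambda _ fun c => (ih _ _).mono
          (biSup_mono fun _ hv => subtreeNodes_snoc_subset c hv) le_rfl
      simp only [stableAux, dif_pos hj]
      exact (measurable_of_countable fun p : Bool × (Fin d → Bool) => !p.1 &&
        decide (d - 1 ≤ (Finset.univ.filter fun c => p.2 c = true).card)).comp
          (hroot.prodMk hchildren)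
    · simp only [stableAux, dif_neg hj]
      exact measurable_const

theorem measurableSet_unstableSet (fuel j : ℕ) (path : Fin j → Fin d) :
    MeasurableSet[subtreeSigma R j path] (unstableSet R fuel j path) :=
  measurable_stableAux fuel j path (measurableSet_singleton false)

theorem unstableSet_zero (j : ℕ) (path : Fin j → Fin d) : unstableSet R 0 j path = ∅ := by
  simp [unstableSet, stableAux]

theorem unstableSet_succ_of_not_lt {j : ℕ} (hj : ¬j < H) (fuel : ℕ) (path : Fin j → Fin d) :
    unstableSet R (fuel + 1) j path = ∅ := by
  simp [unstableSet, stableAux, hj]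

theorem unstableSet_succ_subset {j : ℕ} (hj : j < H) (fuel : ℕ) (path : Fin j → Fin d) :
    unstableSet R (fuel + 1) j path ⊆ {ω | R ⟨⟨j, hj⟩, path⟩ ω = true} ∪
      ⋃ p ∈ (Finset.univ : Finset (Fin d)).offDiag,
        unstableSet R fuel (j + 1) (Fin.snoc path p.1) ∩
          unstableSet R fuel (j + 1) (Fin.snoc path p.2) := by
  intro ω hω
  simp only [unstableSet, Set.mem_ofPred_eq, stableAux, dif_pos hj, Bool.and_eq_false_iff,
    Bool.not_eq_false', decide_eq_false_iff_not, not_le] at hω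
  rcases hω with hrad | hfew
  · exact Or.inl hrad
  · obtain ⟨c, c', hne, hc, hc'⟩ := exists_ne_not_of_card_filter_lt_pred _ hfew
    simp only [Bool.not_eq_true] at hc hc'
    exact Or.inr <| Set.mem_biUnion (x := (c, c'))
      (Finset.mem_offDiag.2 ⟨Finset.mem_univ _, Finset.mem_univ _, hne⟩) ⟨hc, hc'⟩

end Stability

section Probability

variable {Ω : Type*} [MeasurableSpace Ω] {μ : Measure Ω} {d H : ℕ}
  {R : TreeNode d H → Ω → Bool}

theorem measure_unstableSet_inter (hmeas : ∀ v, Measurable (R v)) (hindep : iIndepFun R μ)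
    {fuel j : ℕ} {path : Fin j → Fin d} {c c' : Fin d} (hcc : c ≠ c') :
    μ (unstableSet R fuel (j + 1) (Fin.snoc path c) ∩
        unstableSet R fuel (j + 1) (Fin.snoc path c')) =
      μ (unstableSet R fuel (j + 1) (Fin.snoc path c)) *
      μ (unstableSet R fuel (j + 1) (Fin.snoc path c')) :=
  (Indep_iff _ _ _).1
    (indep_iSup_of_disjoint (fun v => (hmeas v).comap_le) hindep
      (disjoint_subtreeNodes_snoc hcc))
    _ _ (measurableSet_unstableSet _ _ _) (measurableSet_unstableSet _ _ _)

theorem measure_unstableSet_le (hmeas : ∀ v, Measurable (R v)) (hindep : iIndepFun R μ)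
    {α ε : ENNReal} (hα : ∀ v, μ {ω | R v ω = true} ≤ α)
    (hrec : α + (d : ENNReal) ^ 2 * ε ^ 2 ≤ ε) (fuel j : ℕ) (path : Fin j → Fin d) :
    μ (unstableSet R fuel j path) ≤ ε := by
  induction fuel generalizing j with
  | zero => simp [unstableSet_zero]
  | succ fuel ih =>
    by_cases hj : j < H
    · have hpairs : ∑ p ∈ (Finset.univ : Finset (Fin d)).offDiag,
          μ (unstableSet R fuel (j + 1) (Fin.snoc path p.1) ∩
            unstableSet R fuel (j + 1) (Fin.snoc path p.2)) ≤ (d : ENNReal) ^ 2 * ε ^ 2 :=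
        calc _ ≤ ∑ _p ∈ (Finset.univ : Finset (Fin d)).offDiag, ε ^ 2 := by
              refine Finset.sum_le_sum fun p hp => ?_
              rw [measure_unstableSet_inter hmeas hindep (Finset.mem_offDiag.1 hp).2.2, sq]
              exact mul_le_mul' (ih _ _) (ih _ _)
          _ ≤ (d : ENNReal) ^ 2 * ε ^ 2 := by
              rw [Finset.sum_const, nsmul_eq_mul]
              gcongr
              exact_mod_cast (Finset.card_le_univ _).trans_eq (by simp [sq])
      calc μ (unstableSet R (fuel + 1) j path)
          ≤ μ {ω | R ⟨⟨j, hj⟩, path⟩ ω = true} +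
              ∑ p ∈ (Finset.univ : Finset (Fin d)).offDiag,
                μ (unstableSet R fuel (j + 1) (Fin.snoc path p.1) ∩
                  unstableSet R fuel (j + 1) (Fin.snoc path p.2)) :=
            (measure_mono (unstableSet_succ_subset hj fuel path)).trans
              ((measure_union_le _ _).trans (add_le_add_right (measure_biUnion_finset_le _ _) _))
        _ ≤ ε := (add_le_add (hα _) hpairs).trans hrec
    · simp [unstableSet_succ_of_not_lt hj]

theorem one_sub_le_measure_stableAux [IsProbabilityMeasure μ] (hmeas : ∀ v, Measurable (R v))
    (hindep : iIndepFun R μ) {α ε : ENNReal} (hα : ∀ v, μ {ω | R v ω = true} ≤ α)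
    (hrec : α + (d : ENNReal) ^ 2 * ε ^ 2 ≤ ε) (fuel j : ℕ) (path : Fin j → Fin d) :
    1 - ε ≤ μ {ω | stableAux d H R ω fuel j path = true} := by
  have hcompl : {ω | stableAux d H R ω fuel j path = true} = (unstableSet R fuel j path)ᶜ := by
    ext ω
    simp [unstableSet]
  rw [hcompl, prob_compl_eq_one_sub (subtreeSigma_le hmeas j path _
    (measurableSet_unstableSet fuel j path))]
  exact tsub_le_tsub_left (measure_unstableSet_le hmeas hindep hα hrec fuel j path) 1

end Probability

theorem stmt16_general (d : ℕ) (h : ℕ → ℝ)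
    (hh : Filter.Tendsto h Filter.atTop Filter.atTop)
    (Ω : ℕ → Type) (ms : ∀ n, MeasureSpace (Ω n))
    (hprobm : ∀ n, IsProbabilityMeasure (ℙ : Measure (Ω n)))
    (H : ℕ → ℕ)
    (R : ∀ n, (Σ j : Fin (H n), (Fin (j : ℕ) → Fin d)) → Ω n → Bool)
    (hmeas : ∀ n v, Measurable (R n v))
    (hindep : ∀ n, iIndepFun (R n) ℙ)
    (hα : ∀ n, 0 < h n → ∀ v, ℙ {ω | R n v ω = true} ≤ ENNReal.ofReal (1 / h n)) :
    ∃ N : ℕ, ∀ n : ℕ, N ≤ n →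
      ℙ {ω | stableAux d (H n) (R n) ω (H n) 0 Fin.elim0 = true}
        ≥ 1 - ENNReal.ofReal (1 / Real.sqrt (h n)) := by
  obtain ⟨N, hN⟩ :=
    Filter.eventually_atTop.1 (hh.eventually_ge_atTop (((1 + d ^ 2 : ℕ) : ℝ) ^ 2))
  refine ⟨N, fun n hn => ?_⟩
  have hpos : 0 < h n := lt_of_lt_of_le (by positivity) (hN n hn)
  have hsmall : (1 + (d : ENNReal) ^ 2) * ENNReal.ofReal (1 / √(h n)) ≤ 1 := by
    exact_mod_cast ENNReal.natCast_mul_ofReal_one_div_sqrt_le_one (hN n hn)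
  have hα' : ∀ v, ℙ {ω | R n v ω = true} ≤ ENNReal.ofReal (1 / √(h n)) ^ 2 := fun v =>
    (hα n hpos v).trans_eq (ENNReal.ofReal_one_div_sqrt_sq hpos.le).symm
  exact one_sub_le_measure_stableAux (hmeas n) (hindep n) hα'
    (ENNReal.sq_add_mul_sq_le hsmall) _ _ _

/-- In the same branching process setup, if each internal node is
independently radioactive with probability at most α = 1/h(n) where h(n) → ∞, then for
all sufficiently large n the root is the father of a (d-1)-ary stable subtree with
probability at least 1 - 1/√h(n). -/
theorem stmt16 (d : ℕ) (hd : 3 ≤ d) (h : ℕ → ℝ)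
    (hh : Filter.Tendsto h Filter.atTop Filter.atTop)
    (Ω : ℕ → Type) (ms : ∀ n, MeasureSpace (Ω n))
    (hprobm : ∀ n, IsProbabilityMeasure (ℙ : Measure (Ω n)))
    (H : ℕ → ℕ)
    (R : ∀ n, (Σ j : Fin (H n), (Fin (j : ℕ) → Fin d)) → Ω n → Bool)
    (hmeas : ∀ n v, Measurable (R n v))
    (hindep : ∀ n, iIndepFun (R n) ℙ)
    (hα : ∀ n, 0 < h n → ∀ v, ℙ {ω | R n v ω = true} ≤ ENNReal.ofReal (1 / h n)) :
    ∃ N : ℕ, ∀ n : ℕ, N ≤ n →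
      ℙ {ω | stableAux d (H n) (R n) ω (H n) 0 Fin.elim0 = true}
        ≥ 1 - ENNReal.ofReal (1 / Real.sqrt (h n)) :=
  stmt16_general d h hh Ω ms hprobm H R hmeas hindep hα
end
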